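/- Let n : ℕ and let R ⊆ FreeGroup (Fin n) be a set of relators such that the presentation ⟨Fin n; R⟩ is recursively presented, i.e., REPred (fun l : List (Fin n × Bool) => FreeGroup.mk l ∈ R). Let as : Fin j → FreeGroup (Fin n) and bs : Fin k → FreeGroup (Fin n) be finite tuples generating subgroups A and B of the presented group. Then the 'yes' part of the decomposition problem with respect to A and B is recursively enumerable: REPred (fun p : List (Fin n × Bool) × List (Fin n × Bool) => ∃ x ∈ Subgroup.closure (Set.range as), ∃ y ∈ Subgroup.closure (Set.range bs), FreeGroup.mk p.1 * (x * FreeGroup.mk p.2 * y)⁻¹ ∈ Subgroup.normalClosure R). (The condition says that w₁ = x·w₂·y holds in the presented group for some x ∈ A, y ∈ B.) -/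

import Mathlib

/-!
An element of `⟨as⟩` is `lift as (mk u)` for a word `u` in `j` letters, and is represented by a
word in the generators computed primitive recursively from `u`; likewise for `⟨bs⟩`. So the
predicate asks for words `u, v` with `w₁ (x(u) w₂ y(v))⁻¹` in the normal closure of `R`.
Membership of a word in the normal closure is r.e.: a witness is a list of conjugates
`c r^{±1} c⁻¹` with `r ∈ R` (r.e. in each entry) whose product freely reduces to the same word
(a primitive recursive check). R.e. predicates are closed under computable substitution,
conjunction, `∀` over the entries of a list and `∃`.
-/

namespace REPred

open Nat.Partrec.Code

variable {α β : Type*} [Primcodable α] [Primcodable β]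

protected theorem comp {p : β → Prop} (hp : REPred p) {f : α → β} (hf : Computable f) :
    REPred fun a => p (f a) :=
  Partrec.comp hp hf

protected theorem and {p q : α → Prop} (hp : REPred p) (hq : REPred q) :
    REPred fun a => p a ∧ q a :=
  (Partrec.bind hp (Partrec.comp hq Computable.fst).to₂).of_eq fun a =>
    Part.ext fun _ => by simp [Part.mem_assert_iff]

theorem of_exists_primrecRel {p : α → Prop} {q : α → ℕ → Prop} (hq : PrimrecRel q)
    (h : ∀ a, p a ↔ ∃ m, q a m) : REPred p := by
  classical
  exact (Partrec.rfind hq.decide.to_comp.partrec₂).dom_re.of_eq fun a => by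
    simp [Nat.rfind_dom, h]

theorem exists_primrecRel {p : α → Prop} (hp : REPred p) :
    ∃ q : α → ℕ → Prop, PrimrecRel q ∧ (∀ a, Monotone (q a)) ∧
      ∀ a, p a ↔ ∃ m, q a m := by
  obtain ⟨c, hc⟩ := exists_code.1 hp
  refine ⟨fun a m => (evaln m c (Encodable.encode a)).isSome,
    Primrec₂.primrecRel ?_, fun a m m' hle h => ?_, fun a => ?_⟩
  · simpa using (Primrec.option_isSome.comp (primrec_evaln.comp
      ((Primrec.snd.pair (Primrec.const c)).pair (Primrec.encode.comp Primrec.fst)))).to₂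
  · obtain ⟨x, hx⟩ := Option.isSome_iff_exists.1 h
    exact Option.isSome_iff_exists.2 ⟨x, evaln_mono hle hx⟩
  · have hdom : p a ↔ (eval c (Encodable.encode a)).Dom := by
      simp [hc, Part.assert]
    simp only [hdom, Part.dom_iff_mem, evaln_complete, Option.isSome_iff_exists, Option.mem_def]
    exact exists_comm

theorem exists_snd {p : α → β → Prop} (hp : REPred fun x : α × β => p x.1 x.2) :
    REPred fun a => ∃ b, p a b := by
  obtain ⟨q, hq, -, hpq⟩ := hp.exists_primrecRel
  classical
  -- a witness `m` encodes the pair of `b` and a witness for `p a b`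
  refine of_exists_primrecRel (q := fun a m =>
      ∃ b ∈ Encodable.decode (α := β) m.unpair.1, q (a, b) m.unpair.2)
    (Primrec₂.primrecRel ((Primrec.option_getD.comp (Primrec.option_map
      (Primrec.decode.comp (Primrec.fst.comp (Primrec.unpair.comp Primrec.snd)))
      (hq.decide.comp ((Primrec.fst.comp Primrec.fst).pair Primrec.snd)
        (Primrec.snd.comp (Primrec.unpair.comp (Primrec.snd.comp Primrec.fst)))).to₂)
      (Primrec.const false)).to₂.of_eq fun a m => ?_)) fun a => ⟨fun ⟨b, hb⟩ => ?_, ?_⟩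
  · cases Encodable.decode (α := β) m.unpair.1 <;> simp
  · obtain ⟨m, hm⟩ := (hpq (a, b)).1 hb
    exact ⟨Nat.pair (Encodable.encode b) m, by simpa using hm⟩
  · rintro ⟨m, b, -, hm⟩
    exact ⟨b, (hpq (a, b)).2 ⟨_, hm⟩⟩

theorem forall_mem_list {p : α → Prop} (hp : REPred p) :
    REPred fun l : List α => ∀ a ∈ l, p a := by
  obtain ⟨q, hq, hmono, hpq⟩ := hp.exists_primrecRel
  refine of_exists_primrecRel (PrimrecRel.forall_mem_list hq) fun l => ⟨fun hl => ?_, ?_⟩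
  · induction l with
    | nil => exact ⟨0, by simp⟩
    | cons a l ih =>
      obtain ⟨m, hm⟩ := ih fun x hx => hl x (List.mem_cons_of_mem _ hx)
      obtain ⟨m', hm'⟩ := (hpq a).1 (hl a List.mem_cons_self)
      refine ⟨max m m', List.forall_mem_cons.2 ⟨hmono a (le_max_right _ _) hm', ?_⟩⟩
      exact fun x hx => hmono x (le_max_left _ _) (hm x hx)
  · rintro ⟨m, hm⟩ a ha
    exact (hpq a).2 ⟨m, hm a ha⟩

end REPred

namespace FreeGroup

section Words

variable {α β G : Type*} [Group G]

def liftWord (f : β → List (α × Bool)) (u : List (β × Bool)) : List (α × Bool) :=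
  u.flatMap fun x => cond x.2 (f x.1) (invRev (f x.1))

theorem mk_liftWord (f : β → List (α × Bool)) (u : List (β × Bool)) :
    mk (liftWord f u) = lift (fun b => mk (f b)) (mk u) := by
  rw [lift_mk]
  induction u with
  | nil => rfl
  | cons x u ih =>
    rw [liftWord, List.flatMap_cons, ← mul_mk, ← liftWord, ih, List.map_cons, List.prod_cons]
    cases x.2 <;> simp [inv_mk]

theorem mem_closure_image_iff {f : β → G} {E : Set β} {x : G} :
    x ∈ Subgroup.closure (f '' E) ↔
      ∃ u : List (β × Bool), (∀ e ∈ u, e.1 ∈ E) ∧ lift f (mk u) = x := by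
  constructor
  · intro hx
    induction hx using Subgroup.closure_induction with
    | mem _ h =>
      obtain ⟨b, hb, rfl⟩ := h
      exact ⟨[(b, true)], by simpa using hb, by simp⟩
    | one => exact ⟨[], by simp, rfl⟩
    | mul _ _ _ _ h₁ h₂ =>
      obtain ⟨u₁, hu₁, rfl⟩ := h₁
      obtain ⟨u₂, hu₂, rfl⟩ := h₂
      exact ⟨u₁ ++ u₂, fun e he => (List.mem_append.1 he).elim (hu₁ e) (hu₂ e), by
        rw [← mul_mk, _root_.map_mul]⟩
    | inv _ _ h =>
      obtain ⟨u, hu, rfl⟩ := h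
      refine ⟨invRev u, fun e he => ?_, by rw [← inv_mk, _root_.map_inv]⟩
      obtain ⟨e', he', rfl⟩ := List.mem_map.1 (List.mem_reverse.1 he)
      exact hu e' he'
  · rintro ⟨u, hu, rfl⟩
    rw [lift_mk]
    refine Subgroup.list_prod_mem _ fun g hg => ?_
    obtain ⟨e, he, rfl⟩ := List.mem_map.1 hg
    have hfe : f e.1 ∈ Subgroup.closure (f '' E) :=
      Subgroup.subset_closure (Set.mem_image_of_mem f (hu e he))
    cases e.2 <;> simp [hfe, inv_mem hfe]

theorem conjugatesOfSet_eq_image_mk (R : Set (FreeGroup α)) :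
    Group.conjugatesOfSet R = (fun e : List (α × Bool) × List (α × Bool) =>
      mk e.1 * mk e.2 * (mk e.1)⁻¹) '' {e | mk e.2 ∈ R} := by
  classical
  ext x
  simp only [Group.mem_conjugatesOfSet_iff, isConj_iff, Set.mem_image, Set.mem_ofPred_eq]
  constructor
  · rintro ⟨r, hr, c, rfl⟩
    exact ⟨(c.toWord, r.toWord), by simpa only [mk_toWord] using hr, by simp only [mk_toWord]⟩
  · rintro ⟨e, he, rfl⟩
    exact ⟨mk e.2, he, mk e.1, rfl⟩

def conjWord (e : List (α × Bool) × List (α × Bool)) : List (α × Bool) :=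
  e.1 ++ e.2 ++ invRev e.1

theorem mk_mem_normalClosure_iff [DecidableEq α] {R : Set (FreeGroup α)} {w : List (α × Bool)} :
    mk w ∈ Subgroup.normalClosure R ↔
      ∃ u : List ((List (α × Bool) × List (α × Bool)) × Bool),
        (∀ e ∈ u, mk e.1.2 ∈ R) ∧ reduce (liftWord conjWord u) = reduce w := by
  have hconj : (fun e => mk (conjWord e)) = fun e : List (α × Bool) × List (α × Bool) =>
      mk e.1 * mk e.2 * (mk e.1)⁻¹ := by
    ext e; simp [conjWord, inv_mk, mul_mk]
  simp only [← toWord_mk, toWord_inj]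
  rw [Subgroup.normalClosure, conjugatesOfSet_eq_image_mk, mem_closure_image_iff]
  simp only [mk_liftWord, hconj, Set.mem_ofPred_eq]

theorem mem_closure_range_iff_exists_liftWord [DecidableEq α] {f : β → FreeGroup α}
    {x : FreeGroup α} :
    x ∈ Subgroup.closure (Set.range f) ↔
      ∃ u, mk (liftWord (fun b => (f b).toWord) u) = x := by
  simp only [← Set.image_univ, mem_closure_image_iff, Set.mem_univ, implies_true, true_and,
    mk_liftWord, mk_toWord]

end Words

section Computability

variable {α β : Type*} [Primcodable α] [Primcodable β]

theorem primrec_invRev : Primrec (invRev : List (α × Bool) → List (α × Bool)) :=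
  Primrec.list_reverse.comp (Primrec.list_map Primrec.id
    ((Primrec.fst.pair (Primrec.not.comp Primrec.snd)).comp Primrec.snd).to₂)

theorem primrec_reduce [DecidableEq α] :
    Primrec (reduce : List (α × Bool) → List (α × Bool)) := by
  -- `reduce (x :: L)` cancels `x` against the head of `reduce L` when they are inverse letters
  let step : (α × Bool) → List (α × Bool) → List (α × Bool) := fun x l =>
    if l.head? = some (x.1, !x.2) then l.tail else x :: l
  have hstep : Primrec₂ step :=
    Primrec.ite (Primrec.eq.comp (Primrec.list_head?.comp Primrec.snd)
        (Primrec.option_some.comp ((Primrec.fst.comp Primrec.fst).pair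
          (Primrec.not.comp (Primrec.snd.comp Primrec.fst)))))
      (Primrec.list_tail.comp Primrec.snd) (Primrec.list_cons.comp Primrec.fst Primrec.snd)
  have hfoldr (L : List (α × Bool)) : L.foldr step [] = reduce L := by
    induction L with
    | nil => rfl
    | cons x L ih =>
      rw [List.foldr_cons, ih, reduce.cons]
      rcases reduce L with _ | ⟨y, l⟩
      · rfl
      · have hinv : y = (x.1, !x.2) ↔ x.1 = y.1 ∧ x.2 = !y.2 := by
          rcases x with ⟨a, _ | _⟩ <;> rcases y with ⟨b, _ | _⟩ <;> simp [eq_comm]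
        simp only [step, List.head?_cons, Option.some.injEq, List.tail_cons, hinv]
  exact (Primrec.list_foldr Primrec.id (Primrec.const []) (hstep.comp
    (Primrec.fst.comp Primrec.snd) (Primrec.snd.comp Primrec.snd)).to₂).of_eq hfoldr

theorem primrec_liftWord {f : β → List (α × Bool)} (hf : Primrec f) : Primrec (liftWord f) :=
  Primrec.list_flatMap Primrec.id (Primrec.cond (Primrec.snd.comp Primrec.snd)
    (hf.comp (Primrec.fst.comp Primrec.snd))
    (primrec_invRev.comp (hf.comp (Primrec.fst.comp Primrec.snd)))).to₂

theorem primrec_conjWord : Primrec (conjWord : List (α × Bool) × List (α × Bool) → _) :=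
  Primrec.list_append.comp (Primrec.list_append.comp Primrec.fst Primrec.snd)
    (primrec_invRev.comp Primrec.fst)

theorem rePred_mk_mem_normalClosure [DecidableEq α] {R : Set (FreeGroup α)}
    (hR : REPred fun w : List (α × Bool) => mk w ∈ R) :
    REPred fun w : List (α × Bool) => mk w ∈ Subgroup.normalClosure R := by
  have hrel : REPred fun x : List (α × Bool) ×
      List ((List (α × Bool) × List (α × Bool)) × Bool) =>
      (∀ e ∈ x.2, mk e.1.2 ∈ R) ∧ reduce (liftWord conjWord x.2) = reduce x.1 :=
    ((hR.comp (Computable.snd.comp Computable.fst)).forall_mem_list.comp Computable.snd).and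
      (Primrec.eq.comp (primrec_reduce.comp ((primrec_liftWord primrec_conjWord).comp
        Primrec.snd)) (primrec_reduce.comp Primrec.fst)).computablePred.to_re
  exact hrel.exists_snd.of_eq fun w => mk_mem_normalClosure_iff.symm

end Computability

end FreeGroup

/-- The "yes" part of the decomposition problem with respect to two finitely
generated subgroups of a recursively presented group `⟨Fin n; R⟩` is
recursively enumerable. -/
theorem decomposition_problem_yes_part_re (n : ℕ) (R : Set (FreeGroup (Fin n)))
    (hR : REPred (fun l : List (Fin n × Bool) => FreeGroup.mk l ∈ R))
    (j k : ℕ) (as : Fin j → FreeGroup (Fin n)) (bs : Fin k → FreeGroup (Fin n)) :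
    REPred (fun p : List (Fin n × Bool) × List (Fin n × Bool) =>
      ∃ x ∈ Subgroup.closure (Set.range as), ∃ y ∈ Subgroup.closure (Set.range bs),
        FreeGroup.mk p.1 * (x * FreeGroup.mk p.2 * y)⁻¹ ∈
          Subgroup.normalClosure R) := by
  let F : (List (Fin n × Bool) × List (Fin n × Bool)) ×
      (List (Fin j × Bool) × List (Fin k × Bool)) → List (Fin n × Bool) := fun z =>
    z.1.1 ++ FreeGroup.invRev (FreeGroup.liftWord (fun i => (as i).toWord) z.2.1 ++ z.1.2 ++
      FreeGroup.liftWord (fun i => (bs i).toWord) z.2.2)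
  have hF : Primrec F :=
    Primrec.list_append.comp (Primrec.fst.comp Primrec.fst) (FreeGroup.primrec_invRev.comp
      (Primrec.list_append.comp (Primrec.list_append.comp
        ((FreeGroup.primrec_liftWord (Primrec.dom_finite _)).comp (Primrec.fst.comp Primrec.snd))
        (Primrec.snd.comp Primrec.fst))
        ((FreeGroup.primrec_liftWord (Primrec.dom_finite _)).comp (Primrec.snd.comp Primrec.snd))))
  have hN := FreeGroup.rePred_mk_mem_normalClosure hR
  refine ((hN.comp hF.to_comp).exists_snd (p := fun p uv =>
    FreeGroup.mk (F (p, uv)) ∈ Subgroup.normalClosure R)).of_eq fun p => ?_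
  simp only [FreeGroup.mem_closure_range_iff_exists_liftWord, exists_exists_eq_and, Prod.exists,
    F, ← FreeGroup.mul_mk, ← FreeGroup.inv_mk]
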